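/- arXiv:1804.06075 — 2 statements merged into one kernel-verified Lean document; each statement's English description precedes it below -/
import Mathlib

section
/- Ward–Takahashi identity summed over colours: for all indices p₁, p₂ ∈ {0,…,N} with p₁ ≠ p₂, the following identity of formal power series in λ' (with smooth-function coefficients) holds: Σ_{a=1}^{3} Σ_{m=0}^{N} ∂²Z/(∂J^a_{p₁m} ∂J^a_{mp₂}) = (V/(E_{p₁} − E_{p₂})) Σ_{a=1}^{3} Σ_{m=0}^{N} ( J^a_{mp₁} ∂Z/∂J^a_{mp₂} − J^a_{p₂m} ∂Z/∂J^a_{p₁m} ). -/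
open MeasureTheory PowerSeries Finset

noncomputable section

/-- Index set for the sources `J^a_{nm}`: a colour `a ∈ {1,2,3}` and a pair of
matrix indices `n, m ∈ {0,…,N}`. -/
abbrev SrcIdx (N : ℕ) := Fin 3 × Fin (N + 1) × Fin (N + 1)

/-- The ring of (smooth-)function coefficients: functions of the sources `J`. -/
abbrev Fn (N : ℕ) := (SrcIdx N → ℝ) → ℝ

/-- `σ_{abc} = 1` if the colours `a, b, c` are pairwise distinct, `0` otherwise. -/
def sigma3 (a b c : Fin 3) : ℝ := if a ≠ b ∧ b ≠ c ∧ a ≠ c then 1 else 0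

/-- Eigenvalues of the external field: `E_m = m/V + μ²/2`. -/
def Eev (N : ℕ) (V μsq : ℝ) (m : Fin (N + 1)) : ℝ := (m : ℝ) / V + μsq / 2

/-- `H_{nm} = E_n + E_m`. -/
def Hev (N : ℕ) (V μsq : ℝ) (n m : Fin (N + 1)) : ℝ := Eev N V μsq n + Eev N V μsq m

/-- The free partition function
`Z_free[J] = exp(Σ_a Σ_{n,m} (V/(2H_{nm})) J^a_{nm} J^a_{mn})`. -/
def Zfree (N : ℕ) (V μsq : ℝ) : Fn N := fun J =>
  Real.exp (∑ a : Fin 3, ∑ n : Fin (N + 1), ∑ m : Fin (N + 1),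
    V / (2 * Hev N V μsq n m) * (J (a, n, m) * J (a, m, n)))

/-- Partial derivative `∂/∂J^a_{nm}` of a function of the sources. -/
def pd (N : ℕ) (i : SrcIdx N) (f : Fn N) : Fn N :=
  fun J => fderiv ℝ f J (Pi.single i 1)

/-- The interaction operator
`D = (1/(3V²)) Σ_{a,b,c} Σ_{n,m,l} σ_{abc} ∂³/(∂J^a_{nm} ∂J^b_{ml} ∂J^c_{ln})`. -/
def Dop (N : ℕ) (V : ℝ) (f : Fn N) : Fn N := fun J =>
  (1 / (3 * V ^ 2)) *
    ∑ a : Fin 3, ∑ b : Fin 3, ∑ c : Fin 3,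
      ∑ n : Fin (N + 1), ∑ m : Fin (N + 1), ∑ l : Fin (N + 1),
        sigma3 a b c * pd N (a, n, m) (pd N (b, m, l) (pd N (c, l, n) f)) J

/-- The partition function `Z[J] = Σ_k ((−1)^k/k!) λ'^k D^k Z_free[J]` as a formal
power series in the coupling constant `λ'` with function coefficients. -/
def Zser (N : ℕ) (V μsq : ℝ) : PowerSeries (Fn N) :=
  PowerSeries.mk fun k => fun J =>
    ((-1 : ℝ) ^ k / (Nat.factorial k : ℝ)) * (Dop N V)^[k] (Zfree N V μsq) J

/-- Partial derivative `∂/∂J^a_{nm}` acting coefficientwise on a formal power series. -/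
def Pd (N : ℕ) (i : SrcIdx N) (S : PowerSeries (Fn N)) : PowerSeries (Fn N) :=
  PowerSeries.mk fun k => pd N i (PowerSeries.coeff k S)

/-- Coefficientwise multiplication by a function of the sources (in particular by a
coordinate function or by a real constant). -/
def Cf (N : ℕ) (g : Fn N) : PowerSeries (Fn N) := PowerSeries.C g

/-- Evaluation of every coefficient at `J = 0`, giving a series in `ℝ[[λ']]`. -/
def ev0 (N : ℕ) : PowerSeries (Fn N) →+* PowerSeries ℝ :=
  PowerSeries.map (Pi.evalRingHom (fun _ : SrcIdx N → ℝ => ℝ) 0)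

end

/-!
The coefficient of `λ'^k` in `Z` is a multiple of `D^k Z_free`. Write
`L = Σ_a Σ_m ∂_{p₁m} ∂_{mp₂}` and `T = Σ_a Σ_m (J_{mp₁} ∂_{mp₂} - J_{p₂m} ∂_{p₁m})`, so that the
identity reads `L Z = c T Z` with `c = V/(E_{p₁} - E_{p₂})`. `T` is the derivative along the
infinitesimal conjugation `J ↦ J + t [J, E_{p₁p₂}]` of every colour. `L` commutes with `D` because
partial derivatives commute, and `T` commutes with `D` because `D` is the trace of a cubic
in the `∂`'s: using only `[∂_i, J_j] = δ_{ij}`, the commutator `[T, D]` telescopes along each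
contracted matrix index. On `Z_free` the identity `L Z_free = c T Z_free` is a partial-fraction
identity between propagators, hence `L D^k Z_free = D^k L Z_free = c D^k T Z_free = c T D^k Z_free`.
-/

open scoped ContDiff

noncomputable section

section SmoothFunctions

variable (E : Type*) [NormedAddCommGroup E] [NormedSpace ℝ E]

/-- `fderiv` is additive only on differentiable functions (it is `0` elsewhere), so the
differential operators are set up as endomorphisms of this submodule. -/
def smoothFunctions : Submodule ℝ (E → ℝ) where
  carrier := {f | ContDiff ℝ ∞ f}
  add_mem' (hf : ContDiff ℝ ∞ _) hg := hf.add hg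
  zero_mem' := (contDiff_const : ContDiff ℝ ∞ fun _ : E => (0 : ℝ))
  smul_mem' c _ (hf : ContDiff ℝ ∞ _) := hf.const_smul c

variable {E}

namespace smoothFunctions

theorem contDiff_coe (f : smoothFunctions E) : ContDiff ℝ ∞ (f : E → ℝ) := f.2

theorem differentiable_coe (f : smoothFunctions E) : Differentiable ℝ (f : E → ℝ) :=
  (contDiff_coe f).differentiable (by simp)

def dirDeriv (v : E) : Module.End ℝ (smoothFunctions E) where
  toFun f := ⟨fun x => fderiv ℝ (f : E → ℝ) x v,
    ((contDiff_coe f).fderiv_right (m := ∞) le_rfl).clm_apply contDiff_const⟩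
  map_add' f g := by
    ext x
    exact congrArg (· v) (fderiv_add (differentiable_coe f x) (differentiable_coe g x))
  map_smul' c f := by
    ext x
    exact congrArg (· v) (fderiv_const_smul (differentiable_coe f x) c)

theorem coe_dirDeriv (v : E) (f : smoothFunctions E) :
    (dirDeriv v f : E → ℝ) = fun x => fderiv ℝ f x v := rfl

theorem dirDeriv_commute (v w : E) : Commute (dirDeriv v) (dirDeriv w) := by
  ext f x
  have hF : Differentiable ℝ (fderiv ℝ (f : E → ℝ)) :=
    ((contDiff_coe f).fderiv_right (m := ∞) le_rfl).differentiable (by simp)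
  have hflip : ∀ u : E, fderiv ℝ (fun y => fderiv ℝ (f : E → ℝ) y u) x
      = (fderiv ℝ (fderiv ℝ (f : E → ℝ)) x).flip u := fun u => by
    simpa using fderiv_clm_apply (hF x) (differentiableAt_const u)
  simp only [Module.End.mul_apply, coe_dirDeriv, hflip, ContinuousLinearMap.flip_apply]
  exact (contDiff_coe f).contDiffAt.isSymmSndFDerivAt (by simp [ENat.LEInfty.out]) _ _

def mulCLM (ℓ : E →L[ℝ] ℝ) : Module.End ℝ (smoothFunctions E) where
  toFun f := ⟨fun x => ℓ x * (f : E → ℝ) x, ℓ.contDiff.mul (contDiff_coe f)⟩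
  map_add' f g := by ext x; exact mul_add _ _ _
  map_smul' c f := by ext x; exact mul_left_comm _ _ _

theorem coe_mulCLM (ℓ : E →L[ℝ] ℝ) (f : smoothFunctions E) :
    (mulCLM ℓ f : E → ℝ) = fun x => ℓ x * (f : E → ℝ) x := rfl

theorem dirDeriv_mulCLM_apply (v : E) (ℓ : E →L[ℝ] ℝ) (f : smoothFunctions E) :
    dirDeriv v (mulCLM ℓ f) = mulCLM ℓ (dirDeriv v f) + ℓ v • f := by
  ext x
  have h := ((ℓ.hasFDerivAt (x := x)).fun_mul (differentiable_coe f x).hasFDerivAt).fderiv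
  simp only [coe_dirDeriv, coe_mulCLM, h, add_apply, smul_apply, smul_eq_mul, Submodule.coe_add,
    SetLike.val_smul, Pi.add_apply, Pi.smul_apply]
  ring

end smoothFunctions

end SmoothFunctions

section IndexRotation

variable {κ M : Type*} [DecidableEq κ] [AddCommGroup M]

/-- For `G q = ∂_q` this is the commutator `[∂_q, T]` with the generator `T` (`mul_rotElem_sub`). -/
def rotIdx (p₁ p₂ : κ) (q : κ × κ) (G : κ × κ → M) : M :=
  (if q.2 = p₁ then G (q.1, p₂) else 0) - (if q.1 = p₂ then G (p₁, q.2) else 0)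

theorem map_rotIdx {M' : Type*} [AddCommGroup M'] (φ : M →+ M') (p₁ p₂ : κ) (q : κ × κ)
    (G : κ × κ → M) : φ (rotIdx p₁ p₂ q G) = rotIdx p₁ p₂ q (φ ∘ G) := by
  unfold rotIdx
  split_ifs <;> simp

/-- Invariance of a trace `Σ F_{nm,ml,ln}` under infinitesimal conjugation: at each contracted
index the contributions of its two neighbouring factors cancel. -/
theorem sum_rotIdx_cyclic [Fintype κ] (p₁ p₂ : κ) (F : κ × κ → κ × κ → κ × κ → M) :
    ∑ n, ∑ m, ∑ l, (rotIdx p₁ p₂ (n, m) (fun q => F q (m, l) (l, n))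
      + rotIdx p₁ p₂ (m, l) (fun q => F (n, m) q (l, n))
      + rotIdx p₁ p₂ (l, n) (fun q => F (n, m) (m, l) q)) = 0 := by
  simp only [rotIdx, Finset.sum_add_distrib, Finset.sum_sub_distrib, Finset.sum_ite_irrel,
    Finset.sum_const_zero, Fintype.sum_ite_eq']
  abel

end IndexRotation

theorem mul_mul_mul_sub_mul_mul_mul {R : Type*} [Ring R] (r a b c : R) :
    r * (a * b * c) - a * b * c * r
      = (r * a - a * r) * b * c + a * (r * b - b * r) * c + a * b * (r * c - c * r) := by
  noncomm_ring

section CanonicalCommutation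

variable {C κ R : Type*} [Fintype C] [Fintype κ] [Ring R]

def cubicTrace [Algebra ℝ R] (w : C → C → C → ℝ) (d : C × κ × κ → R) : R :=
  ∑ a, ∑ b, ∑ c, ∑ n, ∑ m, ∑ l, w a b c • (d (a, n, m) * d (b, m, l) * d (c, l, n))

def lapElem (d : C × κ × κ → R) (p₁ p₂ : κ) : R :=
  ∑ a, ∑ m, d (a, p₁, m) * d (a, m, p₂)

def rotElem (d x : C × κ × κ → R) (p₁ p₂ : κ) : R :=
  ∑ a, ∑ m, (x (a, m, p₁) * d (a, m, p₂) - x (a, p₂, m) * d (a, p₁, m))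

variable {d x : C × κ × κ → R}

theorem commute_cubicTrace [Algebra ℝ R] (w : C → C → C → ℝ) {r : R}
    (hr : ∀ i, Commute r (d i)) : Commute r (cubicTrace w d) :=
  Commute.sum_right _ _ _ fun _ _ => Commute.sum_right _ _ _ fun _ _ =>
    Commute.sum_right _ _ _ fun _ _ => Commute.sum_right _ _ _ fun _ _ =>
    Commute.sum_right _ _ _ fun _ _ => Commute.sum_right _ _ _ fun _ _ =>
    (((hr _).mul_right (hr _)).mul_right (hr _)).smul_right _

theorem commute_lapElem_cubicTrace [Algebra ℝ R] (hd : ∀ i j, Commute (d i) (d j))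
    (w : C → C → C → ℝ) (p₁ p₂ : κ) : Commute (lapElem d p₁ p₂) (cubicTrace w d) :=
  commute_cubicTrace w fun _ => Commute.sum_left _ _ _ fun _ _ =>
    Commute.sum_left _ _ _ fun _ _ => (hd _ _).mul_left (hd _ _)

variable [DecidableEq C] [DecidableEq κ]

theorem mul_rotElem_sub (hd : ∀ i j, Commute (d i) (d j))
    (hdx : ∀ i j, d i * x j = x j * d i + if j = i then 1 else 0) (p₁ p₂ : κ) (a : C)
    (q : κ × κ) :
    d (a, q) * rotElem d x p₁ p₂ - rotElem d x p₁ p₂ * d (a, q)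
      = rotIdx p₁ p₂ q (fun q' => d (a, q')) := by
  have hterm : ∀ j k, d (a, q) * (x j * d k) - x j * d k * d (a, q)
      = if j = (a, q) then d k else 0 := by
    intro j k
    rw [← mul_assoc, hdx, add_mul, mul_assoc, (hd _ k).eq]
    split_ifs <;> noncomm_ring
  calc d (a, q) * rotElem d x p₁ p₂ - rotElem d x p₁ p₂ * d (a, q)
      = ∑ b, ∑ m, ((d (a, q) * (x (b, m, p₁) * d (b, m, p₂))
            - x (b, m, p₁) * d (b, m, p₂) * d (a, q))
          - (d (a, q) * (x (b, p₂, m) * d (b, p₁, m))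
            - x (b, p₂, m) * d (b, p₁, m) * d (a, q))) := by
        simp only [rotElem, Finset.mul_sum, Finset.sum_mul, ← Finset.sum_sub_distrib, mul_sub,
          sub_mul]
        congr! 2
        abel
    _ = rotIdx p₁ p₂ q (fun q' => d (a, q')) := by
        obtain ⟨n, n'⟩ := q
        simp only [hterm, Prod.mk.injEq, ite_and, Finset.sum_sub_distrib, Finset.sum_ite_irrel,
          Finset.sum_const_zero, Fintype.sum_ite_eq', rotIdx]
        simp only [eq_comm (a := p₁), eq_comm (a := p₂)]

theorem rotElem_mul_sub (hd : ∀ i j, Commute (d i) (d j))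
    (hdx : ∀ i j, d i * x j = x j * d i + if j = i then 1 else 0) (p₁ p₂ : κ) (a b c : C)
    (y₁ y₂ y₃ : κ × κ) :
    rotElem d x p₁ p₂ * (d (a, y₁) * d (b, y₂) * d (c, y₃))
      - d (a, y₁) * d (b, y₂) * d (c, y₃) * rotElem d x p₁ p₂
      = -(rotIdx p₁ p₂ y₁ (fun q => d (a, q) * d (b, y₂) * d (c, y₃))
        + rotIdx p₁ p₂ y₂ (fun q => d (a, y₁) * d (b, q) * d (c, y₃))
        + rotIdx p₁ p₂ y₃ (fun q => d (a, y₁) * d (b, y₂) * d (c, q))) := by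
  have h₁ := map_rotIdx (AddMonoidHom.mulRight (d (b, y₂) * d (c, y₃))) p₁ p₂ y₁
    (fun q => d (a, q))
  have h₂ := map_rotIdx ((AddMonoidHom.mulLeft (d (a, y₁))).comp
    (AddMonoidHom.mulRight (d (c, y₃)))) p₁ p₂ y₂ (fun q => d (b, q))
  have h₃ := map_rotIdx (AddMonoidHom.mulLeft (d (a, y₁) * d (b, y₂))) p₁ p₂ y₃
    (fun q => d (c, q))
  simp only [AddMonoidHom.coe_mulRight, AddMonoidHom.coe_mulLeft, AddMonoidHom.coe_comp,
    Function.comp_def, ← mul_assoc] at h₁ h₂ h₃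
  rw [← h₁, ← h₂, ← h₃, ← mul_rotElem_sub hd hdx, ← mul_rotElem_sub hd hdx,
    ← mul_rotElem_sub hd hdx]
  noncomm_ring

theorem commute_rotElem_cubicTrace [Algebra ℝ R] (hd : ∀ i j, Commute (d i) (d j))
    (hdx : ∀ i j, d i * x j = x j * d i + if j = i then 1 else 0) (w : C → C → C → ℝ)
    (p₁ p₂ : κ) : Commute (rotElem d x p₁ p₂) (cubicTrace w d) := by
  refine sub_eq_zero.1 ?_
  calc rotElem d x p₁ p₂ * cubicTrace w d - cubicTrace w d * rotElem d x p₁ p₂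
      = ∑ a, ∑ b, ∑ c, w a b c • ∑ n, ∑ m, ∑ l,
          (rotElem d x p₁ p₂ * (d (a, n, m) * d (b, m, l) * d (c, l, n))
            - d (a, n, m) * d (b, m, l) * d (c, l, n) * rotElem d x p₁ p₂) := by
        simp only [cubicTrace, Finset.mul_sum, Finset.sum_mul, mul_smul_comm, smul_mul_assoc,
          ← Finset.sum_sub_distrib, ← smul_sub, Finset.smul_sum]
    _ = 0 := by
        refine Finset.sum_eq_zero fun a _ => Finset.sum_eq_zero fun b _ =>
          Finset.sum_eq_zero fun c _ => ?_
        simp only [rotElem_mul_sub hd hdx, Finset.sum_neg_distrib]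
        rw [sum_rotIdx_cyclic p₁ p₂ fun y₁ y₂ y₃ => d (a, y₁) * d (b, y₂) * d (c, y₃),
          neg_zero, smul_zero]

end CanonicalCommutation

theorem apply_pow_eq_smul_apply_pow {R M : Type*} [CommSemiring R] [AddCommMonoid M]
    [Module R M] {L T D : Module.End R M} (hL : Commute L D) (hT : Commute T D) {c : R} {f : M}
    (h : L f = c • T f) (k : ℕ) : L ((D ^ k) f) = c • T ((D ^ k) f) := by
  rw [← Module.End.mul_apply, (hL.pow_right k).eq, Module.End.mul_apply, h, map_smul,
    ← Module.End.mul_apply, ← (hT.pow_right k).eq, Module.End.mul_apply]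

theorem fderiv_sum_mul_mul_single {ι : Type*} [Fintype ι] [DecidableEq ι] {σ : ι → ι}
    (hσ : Function.Involutive σ) {w : ι → ℝ} (hw : ∀ i, w (σ i) = w i) (J : ι → ℝ) (k : ι) :
    fderiv ℝ (fun J : ι → ℝ => ∑ i, w i * (J i * J (σ i))) J (Pi.single k 1)
      = 2 * w k * J (σ k) := by
  have hsum : HasFDerivAt (fun J : ι → ℝ => ∑ i, w i * (J i * J (σ i)))
      (∑ i, w i • (J i • ContinuousLinearMap.proj (σ i)
        + J (σ i) • ContinuousLinearMap.proj i)) J :=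
    HasFDerivAt.fun_sum fun i _ =>
      ((hasFDerivAt_apply (𝕜 := ℝ) i J).fun_mul
        (hasFDerivAt_apply (𝕜 := ℝ) (σ i) J)).const_mul (w i)
  have hinv : ∀ i, σ i = k ↔ i = σ k := fun i => hσ.eq_iff
  simp only [hsum.fderiv, smul_add, Finset.sum_add_distrib, add_apply, _root_.sum_apply,
    smul_apply, ContinuousLinearMap.proj_apply, Pi.single_apply, hinv, smul_eq_mul, mul_ite,
    mul_one, mul_zero, Finset.sum_ite_eq', Finset.mem_univ, if_true, hw]
  ring

open smoothFunctions

variable {N : ℕ}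

abbrev SmoothFn (N : ℕ) := smoothFunctions (SrcIdx N → ℝ)

def derivJ (i : SrcIdx N) : Module.End ℝ (SmoothFn N) := dirDeriv (Pi.single i 1)

def mulJ (j : SrcIdx N) : Module.End ℝ (SmoothFn N) := mulCLM (ContinuousLinearMap.proj j)

theorem coe_derivJ (i : SrcIdx N) (f : SmoothFn N) : (derivJ i f : Fn N) = pd N i f := rfl

theorem coe_mulJ (j : SrcIdx N) (f : SmoothFn N) :
    (mulJ j f : Fn N) = (fun J => J j) * (f : Fn N) := rfl

theorem derivJ_commute (i j : SrcIdx N) : Commute (derivJ i) (derivJ j) :=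
  dirDeriv_commute _ _

theorem mulJ_mulJ_comm (i j : SrcIdx N) (f : SmoothFn N) :
    mulJ i (mulJ j f) = mulJ j (mulJ i f) := by
  ext J
  exact mul_left_comm _ _ _

theorem derivJ_mulJ_apply (i j : SrcIdx N) (f : SmoothFn N) :
    derivJ i (mulJ j f) = mulJ j (derivJ i f) + (if j = i then f else 0) := by
  simp [derivJ, mulJ, dirDeriv_mulCLM_apply, Pi.single_apply]

theorem derivJ_mul_mulJ (i j : SrcIdx N) :
    derivJ i * mulJ j = mulJ j * derivJ i + if j = i then 1 else 0 := by
  ext f : 1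
  simp only [LinearMap.add_apply, Module.End.mul_apply, derivJ_mulJ_apply]
  split_ifs <;> rfl

def interactionOp (N : ℕ) (V : ℝ) : Module.End ℝ (SmoothFn N) :=
  (1 / (3 * V ^ 2)) • cubicTrace sigma3 (derivJ (N := N))

theorem coe_interactionOp (V : ℝ) (f : SmoothFn N) :
    (interactionOp N V f : Fn N) = Dop N V f := by
  ext J
  simp [interactionOp, cubicTrace, Dop, coe_derivJ]

theorem coe_lapElem (p₁ p₂ : Fin (N + 1)) (f : SmoothFn N) :
    (lapElem derivJ p₁ p₂ f : Fn N)
      = ∑ a : Fin 3, ∑ m : Fin (N + 1), pd N (a, p₁, m) (pd N (a, m, p₂) f) := by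
  simp [lapElem, coe_derivJ]

theorem coe_rotElem (p₁ p₂ : Fin (N + 1)) (f : SmoothFn N) :
    (rotElem derivJ mulJ p₁ p₂ f : Fn N) = ∑ a : Fin 3, ∑ m : Fin (N + 1),
      ((fun J => J (a, m, p₁)) * pd N (a, m, p₂) f
        - (fun J => J (a, p₂, m)) * pd N (a, p₁, m) f) := by
  simp [rotElem, coe_derivJ, coe_mulJ]

def srcTranspose (i : SrcIdx N) : SrcIdx N := (i.1, i.2.2, i.2.1)

def freeWeight (V μsq : ℝ) (i : SrcIdx N) : ℝ := V / (2 * Hev N V μsq i.2.1 i.2.2)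

theorem Zfree_eq_exp_sum (V μsq : ℝ) : Zfree N V μsq
    = fun J => Real.exp (∑ i, freeWeight V μsq i * (J i * J (srcTranspose i))) := by
  ext J
  simp only [Zfree, Fintype.sum_prod_type, freeWeight, srcTranspose]

theorem contDiff_Zfree (V μsq : ℝ) : ContDiff ℝ ∞ (Zfree N V μsq) := by
  unfold Zfree
  fun_prop

def smoothZfree (N : ℕ) (V μsq : ℝ) : SmoothFn N := ⟨Zfree N V μsq, contDiff_Zfree V μsq⟩

theorem derivJ_smoothZfree (V μsq : ℝ) (i : SrcIdx N) :
    derivJ i (smoothZfree N V μsq)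
      = (2 * freeWeight V μsq i) • mulJ (srcTranspose i) (smoothZfree N V μsq) := by
  have hw : ∀ j : SrcIdx N, freeWeight V μsq (srcTranspose j) = freeWeight V μsq j := fun j => by
    simp only [freeWeight, srcTranspose, Hev, add_comm]
  have hQ : Differentiable ℝ fun J : SrcIdx N → ℝ =>
      ∑ j, freeWeight V μsq j * (J j * J (srcTranspose j)) := by fun_prop
  ext J
  simp only [coe_derivJ, pd, smoothZfree, Zfree_eq_exp_sum, ((hQ J).hasFDerivAt.exp).fderiv,
    Submodule.coe_smul, coe_mulJ]
  simp only [smul_apply, fderiv_sum_mul_mul_single (σ := srcTranspose) (fun _ => rfl) hw,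
    smul_eq_mul, Pi.smul_apply, Pi.mul_apply]
  ring

section WardFree

variable {V μsq : ℝ} {p₁ p₂ : Fin (N + 1)}

theorem Eev_pos (hV : 0 < V) (hμ : 0 < μsq) (m : Fin (N + 1)) : 0 < Eev N V μsq m := by
  unfold Eev
  positivity

theorem Eev_sub_Eev_ne_zero (hV : 0 < V) (hp : p₁ ≠ p₂) :
    Eev N V μsq p₁ - Eev N V μsq p₂ ≠ 0 := by
  have hdiff : Eev N V μsq p₁ - Eev N V μsq p₂ = ((p₁ : ℝ) - p₂) / V := by unfold Eev; ring
  rw [hdiff]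
  exact div_ne_zero (sub_ne_zero.2 (by exact_mod_cast Fin.val_ne_of_ne hp)) hV.ne'

/-- Partial fractions, from `H_{p₁m} - H_{mp₂} = E_{p₁} - E_{p₂}`. -/
theorem freeWeight_mul_freeWeight (hV : 0 < V) (hμ : 0 < μsq) (hp : p₁ ≠ p₂) (a : Fin 3)
    (m : Fin (N + 1)) :
    2 * freeWeight V μsq (a, m, p₂) * (2 * freeWeight V μsq (a, p₁, m))
      = V / (Eev N V μsq p₁ - Eev N V μsq p₂)
        * (2 * freeWeight V μsq (a, m, p₂) - 2 * freeWeight V μsq (a, p₁, m)) := by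
  have h₁ := Eev_pos hV hμ p₁
  have h₂ := Eev_pos hV hμ p₂
  have hm := Eev_pos hV hμ m
  have h₁₂ := Eev_sub_Eev_ne_zero (μsq := μsq) hV hp
  simp only [freeWeight, Hev]
  field_simp
  ring

theorem lapElem_smoothZfree (hp : p₁ ≠ p₂) :
    lapElem derivJ p₁ p₂ (smoothZfree N V μsq) = ∑ a : Fin 3, ∑ m : Fin (N + 1),
      (2 * freeWeight V μsq (a, m, p₂) * (2 * freeWeight V μsq (a, p₁, m)))
        • mulJ (a, p₂, m) (mulJ (a, m, p₁) (smoothZfree N V μsq)) := by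
  simp [lapElem, derivJ_smoothZfree, derivJ_mulJ_apply, hp.symm, srcTranspose, smul_smul]

theorem rotElem_smoothZfree :
    rotElem derivJ mulJ p₁ p₂ (smoothZfree N V μsq) = ∑ a : Fin 3, ∑ m : Fin (N + 1),
      (2 * freeWeight V μsq (a, m, p₂) - 2 * freeWeight V μsq (a, p₁, m))
        • mulJ (a, p₂, m) (mulJ (a, m, p₁) (smoothZfree N V μsq)) := by
  simp only [rotElem, LinearMap.coe_sum, Finset.sum_apply, LinearMap.sub_apply,
    Module.End.mul_apply, derivJ_smoothZfree, srcTranspose, map_smul, mulJ_mulJ_comm (_, _, p₁),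
    Finset.sum_sub_distrib]
  -- `sub_smul` does not fire on `SmoothFn N`, whose subtraction comes from `AddSubgroupClass`.
  ext J
  simp [sub_mul, Finset.sum_sub_distrib]

theorem lapElem_smoothZfree_eq_smul_rotElem (hV : 0 < V) (hμ : 0 < μsq) (hp : p₁ ≠ p₂) :
    lapElem derivJ p₁ p₂ (smoothZfree N V μsq)
      = (V / (Eev N V μsq p₁ - Eev N V μsq p₂))
        • rotElem derivJ mulJ p₁ p₂ (smoothZfree N V μsq) := by
  simp only [lapElem_smoothZfree hp, rotElem_smoothZfree, Finset.smul_sum, smul_smul,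
    freeWeight_mul_freeWeight hV hμ hp]

end WardFree

theorem Dop_iterate_coe (V : ℝ) (f : SmoothFn N) (k : ℕ) :
    (Dop N V)^[k] f = ((interactionOp N V ^ k) f : Fn N) := by
  induction k with
  | zero => rfl
  | succ k ih =>
    rw [Function.iterate_succ_apply', ih, pow_succ', Module.End.mul_apply, coe_interactionOp]

theorem coeff_Zser (V μsq : ℝ) (k : ℕ) :
    coeff k (Zser N V μsq) = ((((-1) ^ k / k.factorial : ℝ)
      • (interactionOp N V ^ k) (smoothZfree N V μsq) : SmoothFn N) : Fn N) := by
  ext J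
  simp [Zser, smoothZfree, ← Dop_iterate_coe]

end

/-- Ward–Takahashi identity summed over colours: for `p₁ ≠ p₂`,
`Σ_a Σ_m ∂²Z/(∂J^a_{p₁m} ∂J^a_{mp₂})
  = (V/(E_{p₁} − E_{p₂})) Σ_a Σ_m (J^a_{mp₁} ∂Z/∂J^a_{mp₂} − J^a_{p₂m} ∂Z/∂J^a_{p₁m})`,
as formal power series in `λ'` with function coefficients. -/
theorem ward_takahashi_summed (N : ℕ) (V μsq : ℝ) (hV : 0 < V) (hμ : 0 < μsq)
    (p₁ p₂ : Fin (N + 1)) (hp : p₁ ≠ p₂) :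
    (∑ a : Fin 3, ∑ m : Fin (N + 1),
        Pd N (a, p₁, m) (Pd N (a, m, p₂) (Zser N V μsq)))
      = Cf N (fun _ => V / (Eev N V μsq p₁ - Eev N V μsq p₂)) *
          ∑ a : Fin 3, ∑ m : Fin (N + 1),
            (Cf N (fun J => J (a, m, p₁)) * Pd N (a, m, p₂) (Zser N V μsq)
              - Cf N (fun J => J (a, p₂, m)) * Pd N (a, p₁, m) (Zser N V μsq)) := by
  set c := V / (Eev N V μsq p₁ - Eev N V μsq p₂)
  have hward : ∀ k, lapElem derivJ p₁ p₂ ((interactionOp N V ^ k) (smoothZfree N V μsq))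
      = c • rotElem derivJ mulJ p₁ p₂ ((interactionOp N V ^ k) (smoothZfree N V μsq)) :=
    apply_pow_eq_smul_apply_pow
      ((commute_lapElem_cubicTrace derivJ_commute sigma3 p₁ p₂).smul_right _)
      ((commute_rotElem_cubicTrace derivJ_commute derivJ_mul_mulJ sigma3 p₁ p₂).smul_right _)
      (lapElem_smoothZfree_eq_smul_rotElem hV hμ hp)
  ext k : 1
  simp only [map_sum, map_sub, Cf, coeff_C_mul, Pd, coeff_mk, coeff_Zser, ← coe_lapElem,
    ← coe_rotElem, map_smul, hward]
  ext J
  simp only [Submodule.coe_smul, Pi.smul_apply, Pi.mul_apply, smul_eq_mul]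
  ring
end

section
/- Second-order 2-point function of the 2D noncommutative 3-colour model: for all real p₁, p₂ ≥ 0 with p₁ ≠ p₂, lim_{Λ→∞} (1/((1+p₁+p₂)(p₁−p₂))) · [ (3/(1+p₁+p₂)) ∫₀^Λ ( 1/(1+p₂+q) − 1/(1+p₁+q) ) dq − ∫₀^Λ ( 1/(1+p₁+q) − 1/(1+p₁+p₂) )/(q−p₂) dq + ∫₀^Λ ( 1/(1+p₂+q) − 1/(1+p₁+p₂) )/(q−p₁) dq ] = 2(log(1+p₁) − log(1+p₂)) / ((1+p₁+p₂)²(p₁−p₂)). (The second and third integrands equal the smooth functions −1/((1+p₁+q)(1+p₁+p₂)) and −1/((1+p₂+q)(1+p₁+p₂)) respectively, so each cutoff integral is well defined.) -/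
/-!
Away from `q = p` the divided difference `(1/(a+q) - 1/(a+p))/(q - p)` equals
`-1/((a+p)(a+q))`, so with `Lᵢ(Λ) = log (1 + pᵢ + Λ) - log (1 + pᵢ)` the three cutoff integrals
are `L₂ - L₁`, `-L₁/(1+p₁+p₂)` and `-L₂/(1+p₁+p₂)`. The bracket is therefore
`2 (L₂ - L₁)/(1+p₁+p₂)`, whose divergent parts cancel: `log (x + y) - log x → 0`.
-/

open MeasureTheory Real Filter Topology Interval

section OneDivAdd

variable {a Λ : ℝ}

lemma add_pos_of_mem_uIcc_zero (ha : 0 < a) (haΛ : 0 < a + Λ) {q : ℝ} (hq : q ∈ Set.uIcc 0 Λ) :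
    0 < a + q := by
  rcases Set.mem_uIcc.mp hq with ⟨h, _⟩ | ⟨h, _⟩ <;> linarith

lemma intervalIntegrable_one_div_add (ha : 0 < a) (haΛ : 0 < a + Λ) :
    IntervalIntegrable (fun q => 1 / (a + q)) volume 0 Λ :=
  intervalIntegral.intervalIntegrable_one_div
    (fun _ hq => (add_pos_of_mem_uIcc_zero ha haΛ hq).ne') (by fun_prop)

lemma integral_one_div_add (ha : 0 < a) (haΛ : 0 < a + Λ) :
    ∫ q in (0:ℝ)..Λ, 1 / (a + q) = log (a + Λ) - log a := by
  rw [intervalIntegral.integral_comp_add_left (fun x => 1 / x), add_zero,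
    integral_one_div_of_pos ha haΛ, log_div haΛ.ne' ha.ne']

lemma integral_sub_one_div_add {p : ℝ} (ha : 0 < a) (haΛ : 0 < a + Λ) (hap : a + p ≠ 0) :
    ∫ q in (0:ℝ)..Λ, (1 / (a + q) - 1 / (a + p)) / (q - p)
      = -(log (a + Λ) - log a) / (a + p) := by
  have hslope : ∀ᵐ q, q ∈ Ι 0 Λ →
      (1 / (a + q) - 1 / (a + p)) / (q - p) = -(1 / (a + p)) * (1 / (a + q)) := by
    filter_upwards [compl_mem_ae_iff.mpr (measure_singleton p)] with q hqp hq
    have hq₀ : a + q ≠ 0 := (add_pos_of_mem_uIcc_zero ha haΛ (Set.uIoc_subset_uIcc hq)).ne'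
    have hqp : q - p ≠ 0 := sub_ne_zero.mpr hqp
    field_simp
    ring
  rw [intervalIntegral.integral_congr_ae hslope, intervalIntegral.integral_const_mul,
    integral_one_div_add ha haΛ]
  ring

end OneDivAdd

lemma tendsto_log_add_sub_log_add (b c : ℝ) :
    Tendsto (fun x => log (b + x) - log (c + x)) atTop (𝓝 0) :=
  ((tendsto_log_comp_add_sub_log (b - c)).comp (tendsto_atTop_add_const_left _ c tendsto_id)).congr
    fun x => by simp only [Function.comp_apply, id]; ring_nf

theorem second_order_two_point_general (p₁ p₂ : ℝ) (hp₁ : 0 ≤ p₁) (hp₂ : 0 ≤ p₂) :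
    Tendsto (fun Λ : ℝ =>
      (1 / ((1 + p₁ + p₂) * (p₁ - p₂))) *
        ((3 / (1 + p₁ + p₂)) * (∫ q in (0:ℝ)..Λ, (1 / (1 + p₂ + q) - 1 / (1 + p₁ + q)))
          - (∫ q in (0:ℝ)..Λ, (1 / (1 + p₁ + q) - 1 / (1 + p₁ + p₂)) / (q - p₂))
          + ∫ q in (0:ℝ)..Λ, (1 / (1 + p₂ + q) - 1 / (1 + p₁ + p₂)) / (q - p₁)))
      atTop
      (nhds (2 * (Real.log (1 + p₁) - Real.log (1 + p₂))
        / ((1 + p₁ + p₂) ^ 2 * (p₁ - p₂)))) := by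
  have h₁ : 0 < 1 + p₁ := by linarith
  have h₂ : 0 < 1 + p₂ := by linarith
  have hs : 1 + p₁ + p₂ ≠ 0 := by positivity
  have hlim := ((tendsto_log_add_sub_log_add (1 + p₂) (1 + p₁)).add_const
    (log (1 + p₁) - log (1 + p₂))).const_mul (2 / ((1 + p₁ + p₂) ^ 2 * (p₁ - p₂)))
  rw [zero_add, ← mul_div_right_comm] at hlim
  refine hlim.congr' ?_
  filter_upwards [eventually_ge_atTop 0] with Λ hΛ
  have hΛ₁ : 0 < 1 + p₁ + Λ := by positivity
  have hΛ₂ : 0 < 1 + p₂ + Λ := by positivity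
  rw [intervalIntegral.integral_sub (intervalIntegrable_one_div_add h₂ hΛ₂)
      (intervalIntegrable_one_div_add h₁ hΛ₁), integral_one_div_add h₂ hΛ₂,
    integral_one_div_add h₁ hΛ₁, integral_sub_one_div_add h₁ hΛ₁ hs,
    add_right_comm 1 p₁ p₂, integral_sub_one_div_add h₂ hΛ₂ (by rwa [add_right_comm])]
  field_simp
  ring

/-- Second-order 2-point function of the 2D noncommutative 3-colour model:
for all real `p₁, p₂ ≥ 0` with `p₁ ≠ p₂`, the cutoff expression obtained from the `n = 1`
instance of the recursion tends, as the cutoff `Λ → ∞`, to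
`2(log(1+p₁) − log(1+p₂)) / ((1+p₁+p₂)²(p₁−p₂))`. -/
theorem second_order_two_point (p₁ p₂ : ℝ) (hp₁ : 0 ≤ p₁) (hp₂ : 0 ≤ p₂) (hne : p₁ ≠ p₂) :
    Tendsto (fun Λ : ℝ =>
      (1 / ((1 + p₁ + p₂) * (p₁ - p₂))) *
        ((3 / (1 + p₁ + p₂)) * (∫ q in (0:ℝ)..Λ, (1 / (1 + p₂ + q) - 1 / (1 + p₁ + q)))
          - (∫ q in (0:ℝ)..Λ, (1 / (1 + p₁ + q) - 1 / (1 + p₁ + p₂)) / (q - p₂))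
          + ∫ q in (0:ℝ)..Λ, (1 / (1 + p₂ + q) - 1 / (1 + p₁ + p₂)) / (q - p₁)))
      atTop
      (nhds (2 * (Real.log (1 + p₁) - Real.log (1 + p₂))
        / ((1 + p₁ + p₂) ^ 2 * (p₁ - p₂)))) :=
  second_order_two_point_general p₁ p₂ hp₁ hp₂
end
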